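/- arXiv:2006.15301 — 4 statements merged into one kernel-verified Lean document; each statement's English description precedes it below -/
import Mathlib

section
/- Let g : ℝ → ℝ be continuously differentiable, and define the characteristic flow ξ_t(x) = x + t − 2·g(x)·t. Suppose T > 0 and ψ : ℝ × [0,T) → ℝ is continuously differentiable and satisfies ξ_t(ψ(x,t)) = x for all x ∈ ℝ and t ∈ [0,T). Then u(x,t) := g(ψ(x,t)) solves the Lighthill–Whitham–Richards equation ∂u/∂t + (1 − 2u)·∂u/∂x = 0 on ℝ × (0,T), with initial condition u(x,0) = g(x). -/
/-!
Near `(x, t)` the inverse `ψ` of the characteristic flow satisfies `ψ q + σ (ψ q) * q.2 = q.1`,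
where `σ = c ∘ g` is the characteristic speed (`c v = 1 - 2 v` for LWR); put `p = ψ (x, t)`. Differentiating it in `t` and in `x`
gives `a (1 + σ' t) = -σ p` and `b (1 + σ' t) = 1` for `a = ψ_t`, `b = ψ_x`; hence
`a = a b (1 + σ' t) = -σ p · b`, and multiplying by `g' p` turns this into `u_t + c(u) u_x = 0`.
-/

open Filter Topology

section CharacteristicInverse

variable {g c : ℝ → ℝ} {ψ : ℝ × ℝ → ℝ} {x t : ℝ}

theorem exists_hasDerivAt_of_inverse_characteristics
    (hg : DifferentiableAt ℝ g (ψ (x, t))) (hc : DifferentiableAt ℝ c (g (ψ (x, t))))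
    (hψ : DifferentiableAt ℝ ψ (x, t))
    (hinv : ∀ᶠ q in 𝓝 (x, t), ψ q + c (g (ψ q)) * q.2 = q.1) :
    ∃ ut ux : ℝ,
      HasDerivAt (fun τ => g (ψ (x, τ))) ut t ∧
      HasDerivAt (fun y => g (ψ (y, t))) ux x ∧
      ut + c (g (ψ (x, t))) * ux = 0 := by
  set p := ψ (x, t)
  set σ := c ∘ g
  obtain ⟨a, hψt⟩ : ∃ a, HasDerivAt (fun τ => ψ (x, τ)) a t :=
    ⟨_, hψ.hasFDerivAt.comp_hasDerivAt t ((hasDerivAt_const t x).prodMk (hasDerivAt_id t))⟩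
  obtain ⟨b, hψx⟩ : ∃ b, HasDerivAt (fun y => ψ (y, t)) b x :=
    ⟨_, hψ.hasFDerivAt.comp_hasDerivAt x ((hasDerivAt_id x).prodMk (hasDerivAt_const x t))⟩
  have hσ : HasDerivAt σ (deriv σ p) p := (hc.comp p hg).hasDerivAt
  have hσt : HasDerivAt (fun τ => ψ (x, τ) + σ (ψ (x, τ)) * τ)
      (a + (deriv σ p * a * t + σ p * 1)) t :=
    hψt.add ((hσ.comp t hψt).mul (hasDerivAt_id t))
  have hσx : HasDerivAt (fun y => ψ (y, t) + σ (ψ (y, t)) * t) (b + deriv σ p * b * t) x :=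
    hψx.add ((hσ.comp x hψx).mul_const t)
  have ht_eq : a * (1 + deriv σ p * t) = -σ p := by
    have hconst : (fun τ => ψ (x, τ) + σ (ψ (x, τ)) * τ) =ᶠ[𝓝 t] fun _ => x :=
      (Continuous.prodMk_right x).continuousAt.eventually hinv
    have := (hσt.congr_of_eventuallyEq hconst.symm).unique (hasDerivAt_const t x)
    linear_combination this
  have hx_eq : b * (1 + deriv σ p * t) = 1 := by
    have hid : (fun y => ψ (y, t) + σ (ψ (y, t)) * t) =ᶠ[𝓝 x] id :=
      (Continuous.prodMk_left t).continuousAt.eventually hinv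
    have := (hσx.congr_of_eventuallyEq hid.symm).unique (hasDerivAt_id x)
    linear_combination this
  have hab : a = -σ p * b := by linear_combination -a * hx_eq + b * ht_eq
  have hgp := hg.hasDerivAt
  refine ⟨deriv g p * a, deriv g p * b, hgp.comp t hψt, hgp.comp x hψx, ?_⟩
  change deriv g p * a + σ p * (deriv g p * b) = 0
  linear_combination deriv g p * hab

end CharacteristicInverse

/-- If `ψ` is a C¹ inverse of the LWR characteristic flow
`ξ t x = x + t - 2 * g x * t` on `ℝ × [0,T)`, then `u (x,t) = g (ψ (x,t))`
solves `u_t + (1 - 2u) u_x = 0` on `ℝ × (0,T)` with `u (x,0) = g x`. -/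
theorem stmt_0 (g : ℝ → ℝ) (hg : ContDiff ℝ 1 g)
    (ξ : ℝ → ℝ → ℝ) (hξ : ∀ t x, ξ t x = x + t - 2 * g x * t)
    (T : ℝ) (hT : 0 < T)
    (ψ : ℝ × ℝ → ℝ)
    (hψ : ContDiffOn ℝ 1 ψ (Set.univ ×ˢ Set.Ico 0 T))
    (hinv : ∀ x t : ℝ, 0 ≤ t → t < T → ξ t (ψ (x, t)) = x) :
    (∀ x : ℝ, g (ψ (x, 0)) = g x) ∧
    ∀ x t : ℝ, 0 < t → t < T →
      ∃ ut ux : ℝ,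
        HasDerivAt (fun τ : ℝ => g (ψ (x, τ))) ut t ∧
        HasDerivAt (fun y : ℝ => g (ψ (y, t))) ux x ∧
        ut + (1 - 2 * g (ψ (x, t))) * ux = 0 := by
  refine ⟨fun x => ?_, fun x t ht htT => ?_⟩
  · simpa [hξ] using congrArg g (hinv x 0 le_rfl hT)
  · have hnhds : Set.univ ×ˢ Set.Ioo 0 T ∈ 𝓝 (x, t) :=
      prod_mem_nhds univ_mem (Ioo_mem_nhds ht htT)
    have hψx : DifferentiableAt ℝ ψ (x, t) :=
      (hψ.differentiableOn one_ne_zero).differentiableAt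
        (mem_of_superset hnhds (Set.prod_mono le_rfl Set.Ioo_subset_Ico_self))
    have hchar : ∀ᶠ q in 𝓝 (x, t), ψ q + (1 - 2 * g (ψ q)) * q.2 = q.1 := by
      filter_upwards [hnhds] with q hq
      have := hinv q.1 q.2 hq.2.1.le hq.2.2
      rw [hξ] at this
      linear_combination this
    exact exists_hasDerivAt_of_inverse_characteristics (c := fun v => 1 - 2 * v)
      (hg.differentiable one_ne_zero _) (by fun_prop) hψx hchar
end

section
/- Let w : ℝ → ℝ be differentiable with w(0) = 0. Then the function u(x,t) = (1 − x + t + w(t))/(1 + 2t + 2w(t)) satisfies the pathwise perturbed Lighthill–Whitham–Richards equation ∂u/∂t + (1 − 2u)·∂u/∂x + (1 − 2u)·∂u/∂x · w′(t) = 0 at every point (x,t) with 1 + 2t + 2w(t) ≠ 0, together with the initial condition u(x,0) = 1 − x. -/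
/-!
With the clock `s t = t + w t` the perturbed equation reads `u_t + (1 - 2u) u_x s'(t) = 0`, i.e. the
LWR equation run in time `s`. Along characteristics its solution with datum `1 - x` is
`u = (1 - x + s)/(1 + 2s)`. Writing `D = 1 + 2s`, one has `1 - 2u = (2x - 1)/D`, `u_x = -1/D` and
`u_t = s'(2x - 1)/D²`, so the two terms of the equation cancel.
-/

namespace LWR

noncomputable def characteristicSolution (s : ℝ → ℝ) (x t : ℝ) : ℝ :=
  (1 - x + s t) / (1 + 2 * s t)

variable {s : ℝ → ℝ} {s' x t : ℝ}

theorem one_sub_two_mul_characteristicSolution (h : 1 + 2 * s t ≠ 0) :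
    1 - 2 * characteristicSolution s x t = (2 * x - 1) / (1 + 2 * s t) := by
  unfold characteristicSolution
  field_simp
  ring

theorem hasDerivAt_characteristicSolution_time (hs : HasDerivAt s s' t) (h : 1 + 2 * s t ≠ 0) :
    HasDerivAt (characteristicSolution s x) (s' * (2 * x - 1) / (1 + 2 * s t) ^ 2) t := by
  have hnum : HasDerivAt (fun τ => 1 - x + s τ) s' t := hs.const_add (1 - x)
  have hden : HasDerivAt (fun τ => 1 + 2 * s τ) (2 * s') t := (hs.const_mul 2).const_add 1
  refine (hnum.div hden h).congr_deriv ?_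
  ring

theorem hasDerivAt_characteristicSolution_space (s : ℝ → ℝ) (x t : ℝ) :
    HasDerivAt (fun y => characteristicSolution s y t) (-1 / (1 + 2 * s t)) x := by
  have hnum : HasDerivAt (fun y : ℝ => 1 - y + s t) (-1) x :=
    ((hasDerivAt_id x).const_sub 1).add_const (s t)
  exact hnum.div_const _

theorem characteristicSolution_pde (h : 1 + 2 * s t ≠ 0) :
    s' * (2 * x - 1) / (1 + 2 * s t) ^ 2
      + (1 - 2 * characteristicSolution s x t) * (-1 / (1 + 2 * s t)) * s' = 0 := by
  rw [one_sub_two_mul_characteristicSolution h]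
  field_simp
  ring

end LWR

open LWR in
/-- For a differentiable path `w` with `w 0 = 0`, the function
`u (x,t) = (1 - x + t + w t)/(1 + 2t + 2 w t)` solves the pathwise perturbed LWR
equation `u_t + (1 - 2u) u_x + (1 - 2u) u_x · w' t = 0` wherever `1 + 2t + 2 w t ≠ 0`,
with `u (x,0) = 1 - x`. -/
theorem stmt_10 (w : ℝ → ℝ) (hw : Differentiable ℝ w) (hw0 : w 0 = 0) :
    (∀ x : ℝ, (1 - x + 0 + w 0) / (1 + 2 * 0 + 2 * w 0) = 1 - x) ∧
    ∀ x t : ℝ, 1 + 2 * t + 2 * w t ≠ 0 →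
      ∃ ut ux : ℝ,
        HasDerivAt (fun τ : ℝ => (1 - x + τ + w τ) / (1 + 2 * τ + 2 * w τ)) ut t ∧
        HasDerivAt (fun y : ℝ => (1 - y + t + w t) / (1 + 2 * t + 2 * w t)) ux x ∧
        ut + (1 - 2 * ((1 - x + t + w t) / (1 + 2 * t + 2 * w t))) * ux
          + (1 - 2 * ((1 - x + t + w t) / (1 + 2 * t + 2 * w t))) * ux * deriv w t
          = 0 := by
  refine ⟨fun x => by simp [hw0], fun x t hD => ?_⟩
  set s : ℝ → ℝ := fun τ => τ + w τ
  have hu : ∀ y τ, (1 - y + τ + w τ) / (1 + 2 * τ + 2 * w τ) = characteristicSolution s y τ := by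
    intro y τ
    simp only [characteristicSolution, s]
    ring_nf
  have hs : HasDerivAt s (1 + deriv w t) t := (hasDerivAt_id t).add (hw t).hasDerivAt
  have hD' : 1 + 2 * s t ≠ 0 := by simpa only [s, mul_add, ← add_assoc] using hD
  simp only [hu]
  refine ⟨_, _, hasDerivAt_characteristicSolution_time hs hD',
    hasDerivAt_characteristicSolution_space s x t, ?_⟩
  linear_combination characteristicSolution_pde (x := x) (s' := 1 + deriv w t) hD'
end

section
/- Let w : ℝ → ℝ be differentiable with w(0) = 0. Then the function u(x,t) = 1 − ((√(8t·(w(t) + t + x) + 1) − 1)/(4t))² satisfies the pathwise perturbed equation ∂u/∂t + (1 − 2u)·∂u/∂x − ∂u/∂x · w′(t) = 0 at every point (x,t) with t > 0 and 8t·(w(t) + t + x) + 1 > 0. -/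
/-!
Along the characteristics of `u_t + (1 - 2u - w') u_x = 0` the solution is constant, so
`u(x, t) = g(ξ) = 1 - ξ²`, where the foot `ξ` of the characteristic through `(x, t)` solves
`x = ξ + (1 - 2 g(ξ)) t - w(t)`, i.e. `2tξ² + ξ = w(t) + t + x`; the stated formula is
`1 - ξ²` for the root `ξ = (√(8t(w t + t + x) + 1) - 1) / (4t)`. Implicit differentiation
of `2tξ² + ξ = S` gives `(4tξ + 1) ξ_x = 1` and `(4tξ + 1) ξ_t = w' + 1 - 2ξ²`, and with
`u_t = -2ξ ξ_t`, `u_x = -2ξ ξ_x` the equation reduces to `ξ_t + (2ξ² - 1 - w') ξ_x = 0`.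
-/

/-- The root `ξ` of `2tξ² + ξ = S` that stays bounded as `t → 0`. -/
noncomputable def charFoot (t S : ℝ) : ℝ := (√(8 * t * S + 1) - 1) / (4 * t)

lemma four_mul_mul_charFoot_add_one {t : ℝ} (S : ℝ) (ht : t ≠ 0) :
    4 * t * charFoot t S + 1 = √(8 * t * S + 1) := by
  unfold charFoot
  field_simp
  ring

lemma HasDerivAt.charFoot {T S : ℝ → ℝ} {T' S' a : ℝ} (hT : HasDerivAt T T' a)
    (hS : HasDerivAt S S' a) (hT0 : T a ≠ 0) (hpos : 0 < 8 * T a * S a + 1) :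
    HasDerivAt (fun s => charFoot (T s) (S s))
      ((S' - 2 * T' * charFoot (T a) (S a) ^ 2) / (4 * T a * charFoot (T a) (S a) + 1)) a := by
  set r := √(8 * T a * S a + 1) with hr
  have hr0 : r ≠ 0 := (Real.sqrt_pos.mpr hpos).ne'
  have hr2 : r ^ 2 = 8 * T a * S a + 1 := Real.sq_sqrt hpos.le
  have hroot : HasDerivAt (fun s => √(8 * T s * S s + 1))
      ((8 * T' * S a + 8 * T a * S') / (2 * r)) a := by
    have hin : HasDerivAt (fun s => 8 * T s * S s + 1) (8 * T' * S a + 8 * T a * S') a :=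
      ((hT.const_mul 8).mul hS).add_const 1
    exact hin.sqrt hpos.ne'
  have hq := (hroot.sub_const 1).div (hT.const_mul 4) (mul_ne_zero four_ne_zero hT0)
  rw [four_mul_mul_charFoot_add_one _ hT0, ← hr]
  refine hq.congr_deriv ?_
  simp only [_root_.charFoot, ← hr]
  field_simp
  linear_combination (-4 * T') * hr2

theorem stmt_13_general (w : ℝ → ℝ) (hw : Differentiable ℝ w) :
    ∀ x t : ℝ, 0 < t → 0 < 8 * t * (w t + t + x) + 1 →
      ∃ ut ux : ℝ,
        HasDerivAt (fun τ : ℝ =>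
          1 - ((Real.sqrt (8 * τ * (w τ + τ + x) + 1) - 1) / (4 * τ)) ^ 2) ut t ∧
        HasDerivAt (fun y : ℝ =>
          1 - ((Real.sqrt (8 * t * (w t + t + y) + 1) - 1) / (4 * t)) ^ 2) ux x ∧
        ut + (1 - 2 * (1 - ((Real.sqrt (8 * t * (w t + t + x) + 1) - 1) / (4 * t)) ^ 2))
            * ux - ux * deriv w t = 0 := by
  intro x t ht hpos
  set ξ := charFoot t (w t + t + x)
  have hξt := (hasDerivAt_id t).charFoot
    (((hw t).hasDerivAt.add (hasDerivAt_id t)).add_const x) ht.ne' hpos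
  have hξx := (hasDerivAt_const x t).charFoot
    ((hasDerivAt_id x).const_add (w t + t)) ht.ne' hpos
  have hut : HasDerivAt (fun τ => 1 - charFoot τ (w τ + τ + x) ^ 2)
      (-2 * ξ * ((deriv w t + 1 - 2 * ξ ^ 2) / (4 * t * ξ + 1))) t :=
    ((hξt.pow 2).const_sub 1).congr_deriv (by simp only [id, Pi.add_apply]; ring)
  have hux : HasDerivAt (fun y => 1 - charFoot t (w t + t + y) ^ 2)
      (-2 * ξ * (1 / (4 * t * ξ + 1))) x :=
    ((hξx.pow 2).const_sub 1).congr_deriv (by simp only [id]; ring)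
  refine ⟨_, _, hut, hux, ?_⟩
  show _ + (1 - 2 * (1 - ξ ^ 2)) * _ - _ = 0
  ring

/-- For a differentiable path `w` with `w 0 = 0`, the function
`u (x,t) = 1 - ((√(8t(w t + t + x) + 1) - 1)/(4t))²` solves the pathwise perturbed
equation `u_t + (1 - 2u) u_x - u_x · w' t = 0` wherever `t > 0` and
`8t(w t + t + x) + 1 > 0`. -/
theorem stmt_13 (w : ℝ → ℝ) (hw : Differentiable ℝ w) (hw0 : w 0 = 0) :
    ∀ x t : ℝ, 0 < t → 0 < 8 * t * (w t + t + x) + 1 →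
      ∃ ut ux : ℝ,
        HasDerivAt (fun τ : ℝ =>
          1 - ((Real.sqrt (8 * τ * (w τ + τ + x) + 1) - 1) / (4 * τ)) ^ 2) ut t ∧
        HasDerivAt (fun y : ℝ =>
          1 - ((Real.sqrt (8 * t * (w t + t + y) + 1) - 1) / (4 * t)) ^ 2) ux x ∧
        ut + (1 - 2 * (1 - ((Real.sqrt (8 * t * (w t + t + x) + 1) - 1) / (4 * t)) ^ 2))
            * ux - ux * deriv w t = 0 :=
  stmt_13_general w hw
end

section
/- Let s : ℝ → ℝ be differentiable with s(0) = 1. Then the function u(x,t) = (1 − x + t − s(t))/(2t − 1) satisfies the pathwise perturbed equation ∂u/∂t + (1 − 2u)·∂u/∂x − ∂u/∂x · s′(t) = 0 at every point (x,t) with t ≠ 1/2, together with the initial condition u(x,0) = x. -/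
/-!
Writing `u = N / (2t - 1)` with `N = 1 - x + t - s t`, the quotient rule gives
`u_t = (1 - s' t - 2u) / (2t - 1)` and `u_x = -1 / (2t - 1)`, and these cancel exactly in
`u_t + (1 - 2u - s' t) u_x`.
-/

theorem HasDerivAt.div_eq_sub_mul_div {f g : ℝ → ℝ} {f' g' t : ℝ} (hf : HasDerivAt f f' t)
    (hg : HasDerivAt g g' t) (ht : g t ≠ 0) :
    HasDerivAt (fun τ => f τ / g τ) ((f' - g' * (f t / g t)) / g t) t := by
  refine (hf.div hg ht).congr_deriv ?_
  field_simp

theorem hasDerivAt_characteristicSolution_time (s : ℝ → ℝ) (c : ℝ) {t : ℝ}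
    (hs : DifferentiableAt ℝ s t) (ht : 2 * t - 1 ≠ 0) :
    HasDerivAt (fun τ => (c + τ - s τ) / (2 * τ - 1))
      ((1 - deriv s t - 2 * ((c + t - s t) / (2 * t - 1))) / (2 * t - 1)) t := by
  have hnum : HasDerivAt (fun τ => c + τ - s τ) (1 - deriv s t) t :=
    ((hasDerivAt_id t).const_add c).sub hs.hasDerivAt
  have hden : HasDerivAt (fun τ : ℝ => 2 * τ - 1) 2 t := by
    simpa using ((hasDerivAt_id t).const_mul 2).sub_const 1
  exact hnum.div_eq_sub_mul_div hden ht

/-- For a differentiable path `s` with `s 0 = 1`, the function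
`u (x,t) = (1 - x + t - s t)/(2t - 1)` solves the pathwise perturbed equation
`u_t + (1 - 2u) u_x - u_x · s' t = 0` wherever `t ≠ 1/2`, with `u (x,0) = x`. -/
theorem stmt_16 (s : ℝ → ℝ) (hs : Differentiable ℝ s) (hs0 : s 0 = 1) :
    (∀ x : ℝ, (1 - x + 0 - s 0) / (2 * 0 - 1) = x) ∧
    ∀ x t : ℝ, t ≠ 1/2 →
      ∃ ut ux : ℝ,
        HasDerivAt (fun τ : ℝ => (1 - x + τ - s τ) / (2 * τ - 1)) ut t ∧
        HasDerivAt (fun y : ℝ => (1 - y + t - s t) / (2 * t - 1)) ux x ∧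
        ut + (1 - 2 * ((1 - x + t - s t) / (2 * t - 1))) * ux
          - ux * deriv s t = 0 := by
  refine ⟨fun x => by rw [hs0]; ring, fun x t ht => ?_⟩
  have hden : 2 * t - 1 ≠ 0 := fun h => ht (by linarith)
  have hux : HasDerivAt (fun y => 1 - y + t - s t) (-1) x := by
    simpa using (((hasDerivAt_id x).const_sub 1).add_const t).sub_const (s t)
  refine ⟨_, -1 / (2 * t - 1), hasDerivAt_characteristicSolution_time s (1 - x) (hs t) hden,
    hux.div_const _, ?_⟩
  ring
end
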